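/- Let u, v ∈ (0,1) and let α, β, γ ∈ (−1,1) with α ≠ 0, β ≠ 0, and set ρ = αβγ. Then C(u,v;ρ) = ∫_{−∞}^{∞} ∫_{−∞}^{∞} Φ((Φ⁻¹(u) − α·x)/√(1−α²)) · Φ((Φ⁻¹(v) − β·y)/√(1−β²)) · φ₂(x,y;γ) dy dx. -/

import Mathlib

open MeasureTheory Real Set

/-- Standard normal density φ. -/
noncomputable def stdPdf (x : ℝ) : ℝ :=
  (1 / Real.sqrt (2 * Real.pi)) * Real.exp (-x ^ 2 / 2)

/-- Standard normal distribution function Φ. -/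
noncomputable def stdCdf (h : ℝ) : ℝ := ∫ x in Set.Iio h, stdPdf x

/-- Inverse Φ⁻¹ of the standard normal distribution function (on (0,1)). -/
noncomputable def stdQuantile : ℝ → ℝ := Function.invFun stdCdf

/-- Bivariate standard normal density φ₂ with correlation ρ. -/
noncomputable def binPdf (x y ρ : ℝ) : ℝ :=
  (1 / (2 * Real.pi * Real.sqrt (1 - ρ ^ 2))) *
    Real.exp (-(x ^ 2 - 2 * ρ * x * y + y ^ 2) / (2 * (1 - ρ ^ 2)))

/-- Bivariate standard normal distribution function Φ₂. -/
noncomputable def binCdf (h k ρ : ℝ) : ℝ :=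
  ∫ x in Set.Iio h, ∫ y in Set.Iio k, binPdf x y ρ

/-- The bivariate normal copula C(u,v;ρ) = Φ₂(Φ⁻¹(u),Φ⁻¹(v);ρ). -/
noncomputable def normCopula (u v ρ : ℝ) : ℝ :=
  binCdf (stdQuantile u) (stdQuantile v) ρ

/-- g(u;ρ) = Φ(√((1−ρ)/(1+ρ))·Φ⁻¹(u)). -/
noncomputable def gFun (u ρ : ℝ) : ℝ :=
  stdCdf (Real.sqrt ((1 - ρ) / (1 + ρ)) * stdQuantile u)

/-! Let `(X, Y)` have density `binPdf · · γ` and let `ε₁, ε₂` be independent standard normals.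
Then `Z₁ = αX + √(1 - α²) ε₁` and `Z₂ = βY + √(1 - β²) ε₂` are standard normal with correlation
`αβγ`, and the double integral is `P(Z₁ ≤ Φ⁻¹(u), Z₂ ≤ Φ⁻¹(v))`.

Analytically, the conditional laws compose like a Gaussian Markov chain: averaging
`Φ((k - βy)/√(1 - β²))` over `y ~ N(γx, 1 - γ²)` gives `Φ((k - βγx)/√(1 - β²γ²))`, a Gaussian
convolution. Integrating out `y` this way, then writing `Φ((h - αx)/√(1 - α²))` as an integral over
`t < h`, using the symmetry of `binPdf · · α` and Fubini, and composing once more in `x`, turns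
the double integral into `∫_{t < h} φ(t) Φ((k - αβγt)/√(1 - α²β²γ²)) dt = Φ₂(h, k; αβγ)`. -/

open ProbabilityTheory

lemma stdPdf_eq_gaussianPDFReal : stdPdf = gaussianPDFReal 0 1 := by
  ext x
  simp [stdPdf, gaussianPDFReal_def, div_eq_inv_mul]

lemma stdPdf_nonneg (x : ℝ) : 0 ≤ stdPdf x := by
  rw [stdPdf_eq_gaussianPDFReal]; exact gaussianPDFReal_nonneg _ _ _

lemma integrable_stdPdf : Integrable stdPdf := by
  rw [stdPdf_eq_gaussianPDFReal]; exact integrable_gaussianPDFReal _ _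

lemma integral_stdPdf : ∫ x, stdPdf x = 1 := by
  rw [stdPdf_eq_gaussianPDFReal]; exact integral_gaussianPDFReal_eq_one _ one_ne_zero

lemma stdPdf_mul_stdPdf {a b c d : ℝ} (h : a ^ 2 + b ^ 2 = c ^ 2 + d ^ 2) :
    stdPdf a * stdPdf b = stdPdf c * stdPdf d := by
  simp only [stdPdf, mul_mul_mul_comm _ (exp _), ← exp_add]
  congr 2
  linear_combination -h / 2

lemma stdCdf_nonneg (h : ℝ) : 0 ≤ stdCdf h :=
  integral_nonneg stdPdf_nonneg

lemma stdCdf_le_one (h : ℝ) : stdCdf h ≤ 1 :=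
  integral_stdPdf ▸ setIntegral_le_integral integrable_stdPdf (ae_of_all _ stdPdf_nonneg)

lemma monotone_stdCdf : Monotone stdCdf := fun _ _ hxy =>
  setIntegral_mono_set integrable_stdPdf.integrableOn (ae_of_all _ stdPdf_nonneg)
    (Iio_subset_Iio hxy).eventuallyLE

section Affine

variable {E : Type*} [NormedAddCommGroup E] [NormedSpace ℝ E]

lemma integral_comp_sub_div (f : ℝ → E) (m σ : ℝ) :
    ∫ x, f ((x - m) / σ) = |σ| • ∫ t, f t := by
  rw [← Measure.integral_comp_div f σ]
  exact integral_sub_right_eq_self (fun x => f (x / σ)) m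

lemma setIntegral_Iio_comp_sub_div (f : ℝ → E) (k m : ℝ) {σ : ℝ} (hσ : 0 < σ) :
    ∫ x in Iio k, f ((x - m) / σ) = σ • ∫ t in Iio ((k - m) / σ), f t := by
  have hpre : (fun x => (x - m) / σ) ⁻¹' Iio ((k - m) / σ) = Iio k := by
    ext x; simp [div_lt_div_iff_of_pos_right hσ]
  calc ∫ x in Iio k, f ((x - m) / σ)
      = ∫ x, (Iio ((k - m) / σ)).indicator f ((x - m) / σ) := by
        rw [← integral_indicator measurableSet_Iio, ← hpre]; rfl
    _ = σ • ∫ t in Iio ((k - m) / σ), f t := by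
        rw [integral_comp_sub_div, abs_of_pos hσ, integral_indicator measurableSet_Iio]

end Affine

/-- Density of `N(m, σ²)`; unlike `gaussianPDFReal`, parametrised by the standard deviation. -/
noncomputable def normalPdf (m σ x : ℝ) : ℝ := σ⁻¹ * stdPdf ((x - m) / σ)

section NormalPdf

variable {σ : ℝ}

lemma normalPdf_nonneg (hσ : 0 ≤ σ) (m x : ℝ) : 0 ≤ normalPdf m σ x :=
  mul_nonneg (inv_nonneg.mpr hσ) (stdPdf_nonneg _)

lemma integrable_normalPdf (hσ : σ ≠ 0) (m : ℝ) : Integrable (normalPdf m σ) :=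
  ((integrable_stdPdf.comp_div hσ).comp_sub_right m).const_mul σ⁻¹

lemma integral_normalPdf (hσ : 0 < σ) (m : ℝ) : ∫ x, normalPdf m σ x = 1 := by
  simp only [normalPdf]
  rw [integral_const_mul, integral_comp_sub_div, integral_stdPdf,
    abs_of_pos hσ, smul_eq_mul, mul_one, inv_mul_cancel₀ hσ.ne']

lemma setIntegral_Iio_normalPdf (hσ : 0 < σ) (m k : ℝ) :
    ∫ x in Iio k, normalPdf m σ x = stdCdf ((k - m) / σ) := by
  simp only [normalPdf]
  rw [integral_const_mul, setIntegral_Iio_comp_sub_div _ _ _ hσ, smul_eq_mul,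
    inv_mul_cancel_left₀ hσ.ne']
  rfl

end NormalPdf

lemma normalPdf_mul_normalPdf {σ τ D b : ℝ} (hσ : 0 < σ) (hτ : 0 < τ) (hD : 0 < D)
    (hD2 : D ^ 2 = σ ^ 2 + b ^ 2 * τ ^ 2) (m s y : ℝ) :
    normalPdf m τ y * normalPdf (b * y) σ s =
      normalPdf (b * m) D s * normalPdf ((m * σ ^ 2 + b * s * τ ^ 2) / D ^ 2) (σ * τ / D) y := by
  -- completing the square in `y`
  have hsq : ((y - m) / τ) ^ 2 + ((s - b * y) / σ) ^ 2 =
      ((s - b * m) / D) ^ 2 + ((y - (m * σ ^ 2 + b * s * τ ^ 2) / D ^ 2) / (σ * τ / D)) ^ 2 := by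
    field_simp
    rw [hD2]
    ring
  simp only [normalPdf, mul_mul_mul_comm _ (stdPdf _), stdPdf_mul_stdPdf hsq]
  field_simp

lemma integral_normalPdf_mul_normalPdf {σ τ : ℝ} (hσ : 0 < σ) (hτ : 0 < τ) (b m s : ℝ) :
    ∫ y, normalPdf m τ y * normalPdf (b * y) σ s =
      normalPdf (b * m) √(σ ^ 2 + b ^ 2 * τ ^ 2) s := by
  have hD : 0 < √(σ ^ 2 + b ^ 2 * τ ^ 2) := by positivity
  simp_rw [normalPdf_mul_normalPdf hσ hτ hD (sq_sqrt (by positivity))]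
  rw [integral_const_mul, integral_normalPdf (by positivity), mul_one]

lemma integral_setIntegral_swap_normalPdf {w : ℝ → ℝ} (hw : Integrable w) (c : ℝ) {σ : ℝ}
    (hσ : 0 < σ) (s : Set ℝ) :
    ∫ y, ∫ t in s, w y * normalPdf (c * y) σ t = ∫ t in s, ∫ y, w y * normalPdf (c * y) σ t := by
  have hF : AEStronglyMeasurable (Function.uncurry fun y t => w y * normalPdf (c * y) σ t)
      (volume.prod volume) :=
    hw.aestronglyMeasurable.comp_fst.mul
      (Continuous.aestronglyMeasurable (by unfold normalPdf stdPdf; fun_prop))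
  have hFint : Integrable (Function.uncurry fun y t => w y * normalPdf (c * y) σ t)
      (volume.prod volume) := by
    refine (integrable_prod_iff hF).mpr ⟨ae_of_all _ fun y => ?_, ?_⟩
    · simp only [Function.uncurry_apply_pair]
      exact (integrable_normalPdf hσ.ne' (c * y)).const_mul (w y)
    simpa only [Function.uncurry_apply_pair, norm_mul,
      Real.norm_of_nonneg (normalPdf_nonneg hσ.le _ _), integral_const_mul,
      integral_normalPdf hσ, mul_one] using hw.norm
  apply integral_integral_swap
  simpa only [← Measure.prod_restrict, Measure.restrict_univ] using
    hFint.restrict (s := univ ×ˢ s)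

lemma integral_stdCdf_mul_normalPdf {σ τ : ℝ} (hσ : 0 < σ) (hτ : 0 < τ) (k b m : ℝ) :
    ∫ y, stdCdf ((k - b * y) / σ) * normalPdf m τ y =
      stdCdf ((k - b * m) / √(σ ^ 2 + b ^ 2 * τ ^ 2)) := by
  calc ∫ y, stdCdf ((k - b * y) / σ) * normalPdf m τ y
      = ∫ y, ∫ s in Iio k, normalPdf m τ y * normalPdf (b * y) σ s := by
        congr 1 with y
        rw [integral_const_mul, setIntegral_Iio_normalPdf hσ, mul_comm]
    _ = ∫ s in Iio k, ∫ y, normalPdf m τ y * normalPdf (b * y) σ s :=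
        integral_setIntegral_swap_normalPdf (integrable_normalPdf hτ.ne' m) b hσ _
    _ = ∫ s in Iio k, normalPdf (b * m) √(σ ^ 2 + b ^ 2 * τ ^ 2) s := by
        simp_rw [integral_normalPdf_mul_normalPdf hσ hτ]
    _ = _ := setIntegral_Iio_normalPdf (by positivity) _ _

lemma abs_mul_lt_one {a b : ℝ} (ha : |a| < 1) (hb : |b| < 1) : |a * b| < 1 :=
  abs_mul a b ▸ mul_lt_one_of_nonneg_of_lt_one_left (abs_nonneg a) ha hb.le

lemma one_sub_sq_pos_of_abs_lt_one {ρ : ℝ} (hρ : |ρ| < 1) : 0 < 1 - ρ ^ 2 :=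
  sub_pos.mpr ((sq_lt_one_iff_abs_lt_one ρ).mpr hρ)

/-- `P(Y ≤ k ∣ X = x)` for `(X, Y)` with density `binPdf · · ρ`. -/
noncomputable def condCdf (ρ k x : ℝ) : ℝ := stdCdf ((k - ρ * x) / √(1 - ρ ^ 2))

/-- The density of `Y` given `X = x`, for `(X, Y)` with density `binPdf · · ρ`. -/
noncomputable def condPdf (ρ x y : ℝ) : ℝ := normalPdf (ρ * x) √(1 - ρ ^ 2) y

section Conditional

variable {ρ : ℝ}

lemma binPdf_eq_stdPdf_mul_condPdf (hρ : |ρ| < 1) (x y : ℝ) :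
    binPdf x y ρ = stdPdf x * condPdf ρ x y := by
  have hρ2 := one_sub_sq_pos_of_abs_lt_one hρ
  have h2π : 0 < 2 * π := by positivity
  simp only [binPdf, condPdf, normalPdf, stdPdf, div_pow, sq_sqrt hρ2.le]
  have hexp : -(x ^ 2 - 2 * ρ * x * y + y ^ 2) / (2 * (1 - ρ ^ 2)) =
      -x ^ 2 / 2 + -((y - ρ * x) ^ 2 / (1 - ρ ^ 2)) / 2 := by
    field_simp; ring
  rw [hexp, exp_add]
  field_simp
  rw [sq_sqrt h2π.le]

lemma binPdf_comm (x y ρ : ℝ) : binPdf x y ρ = binPdf y x ρ := by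
  simp only [binPdf]; ring_nf

lemma stdPdf_mul_condPdf_comm (hρ : |ρ| < 1) (x y : ℝ) :
    stdPdf x * condPdf ρ x y = stdPdf y * condPdf ρ y x := by
  rw [← binPdf_eq_stdPdf_mul_condPdf hρ, ← binPdf_eq_stdPdf_mul_condPdf hρ, binPdf_comm]

lemma setIntegral_Iio_condPdf (hρ : |ρ| < 1) (k x : ℝ) :
    ∫ y in Iio k, condPdf ρ x y = condCdf ρ k x :=
  setIntegral_Iio_normalPdf (sqrt_pos.mpr (one_sub_sq_pos_of_abs_lt_one hρ)) _ _

lemma binCdf_eq_setIntegral_stdPdf_mul_condCdf (hρ : |ρ| < 1) (h k : ℝ) :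
    binCdf h k ρ = ∫ t in Iio h, stdPdf t * condCdf ρ k t := by
  simp_rw [binCdf, binPdf_eq_stdPdf_mul_condPdf hρ, integral_const_mul,
    setIntegral_Iio_condPdf hρ]

lemma integrable_stdPdf_mul_condCdf (ρ k : ℝ) : Integrable fun x => stdPdf x * condCdf ρ k x :=
  integrable_stdPdf.mul_bdd
    ((monotone_stdCdf.measurable.comp (by fun_prop)).aestronglyMeasurable)
    (ae_of_all _ fun x => by
      rw [condCdf, Real.norm_of_nonneg (stdCdf_nonneg _)]; exact stdCdf_le_one _)

lemma integral_condCdf_mul_condPdf {β γ : ℝ} (hβ : |β| < 1) (hγ : |γ| < 1) (k x : ℝ) :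
    ∫ y, condCdf β k y * condPdf γ x y = condCdf (β * γ) k x := by
  have hβ2 := one_sub_sq_pos_of_abs_lt_one hβ
  have hγ2 := one_sub_sq_pos_of_abs_lt_one hγ
  have hvar : √(√(1 - β ^ 2) ^ 2 + β ^ 2 * √(1 - γ ^ 2) ^ 2) = √(1 - (β * γ) ^ 2) := by
    rw [sq_sqrt hβ2.le, sq_sqrt hγ2.le]; ring_nf
  simp only [condCdf, condPdf]
  rw [integral_stdCdf_mul_normalPdf (sqrt_pos.mpr hβ2) (sqrt_pos.mpr hγ2), hvar, mul_assoc]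

end Conditional

theorem copula_double_integral_rep_general (u v α β γ ρ : ℝ)
    (hα : α ∈ Set.Ioo (-1 : ℝ) 1) (hβ : β ∈ Set.Ioo (-1 : ℝ) 1)
    (hγ : γ ∈ Set.Ioo (-1 : ℝ) 1)
    (hρ : ρ = α * β * γ) :
    normCopula u v ρ =
      ∫ x : ℝ, ∫ y : ℝ,
        stdCdf ((stdQuantile u - α * x) / Real.sqrt (1 - α ^ 2)) *
          stdCdf ((stdQuantile v - β * y) / Real.sqrt (1 - β ^ 2)) *
          binPdf x y γ := by
  obtain rfl : ρ = β * γ * α := by rw [hρ]; ring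
  replace hα : |α| < 1 := abs_lt.mpr hα
  replace hβ : |β| < 1 := abs_lt.mpr hβ
  replace hγ : |γ| < 1 := abs_lt.mpr hγ
  have hβγ : |β * γ| < 1 := abs_mul_lt_one hβ hγ
  set h := stdQuantile u
  set k := stdQuantile v
  calc normCopula u v (β * γ * α)
      = ∫ t in Iio h, stdPdf t * condCdf (β * γ * α) k t :=
        binCdf_eq_setIntegral_stdPdf_mul_condCdf (abs_mul_lt_one hβγ hα) h k
    _ = ∫ t in Iio h, ∫ x, stdPdf x * condCdf (β * γ) k x * condPdf α x t := by
        congr 1 with t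
        rw [← integral_condCdf_mul_condPdf hβγ hα, ← integral_const_mul]
        congr 1 with x
        linear_combination condCdf (β * γ) k x * stdPdf_mul_condPdf_comm hα t x
    _ = ∫ x, ∫ t in Iio h, stdPdf x * condCdf (β * γ) k x * condPdf α x t :=
        (integral_setIntegral_swap_normalPdf (integrable_stdPdf_mul_condCdf _ k) α
          (sqrt_pos.mpr (one_sub_sq_pos_of_abs_lt_one hα)) _).symm
    _ = ∫ x, condCdf α h x * (stdPdf x * ∫ y, condCdf β k y * condPdf γ x y) := by
        congr 1 with x
        rw [integral_const_mul, setIntegral_Iio_condPdf hα, integral_condCdf_mul_condPdf hβ hγ,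
          mul_comm]
    _ = ∫ x, ∫ y, condCdf α h x * condCdf β k y * binPdf x y γ := by
        congr 1 with x
        simp_rw [binPdf_eq_stdPdf_mul_condPdf hγ, ← integral_const_mul]
        congr 1 with y
        ring

theorem copula_double_integral_rep (u v α β γ ρ : ℝ)
    (hu : u ∈ Set.Ioo (0 : ℝ) 1) (hv : v ∈ Set.Ioo (0 : ℝ) 1)
    (hα : α ∈ Set.Ioo (-1 : ℝ) 1) (hβ : β ∈ Set.Ioo (-1 : ℝ) 1)
    (hγ : γ ∈ Set.Ioo (-1 : ℝ) 1) (hα0 : α ≠ 0) (hβ0 : β ≠ 0)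
    (hρ : ρ = α * β * γ) :
    normCopula u v ρ =
      ∫ x : ℝ, ∫ y : ℝ,
        stdCdf ((stdQuantile u - α * x) / Real.sqrt (1 - α ^ 2)) *
          stdCdf ((stdQuantile v - β * y) / Real.sqrt (1 - β ^ 2)) *
          binPdf x y γ :=
  copula_double_integral_rep_general u v α β γ ρ hα hβ hγ hρ
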